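/- arXiv:math/0209355 — 8 statements merged into one kernel-verified Lean document; each statement's English description precedes it below -/
import Mathlib

section
/- Let $A$ be an integral domain and $R = A[x,y]$ the polynomial ring in two variables. For a prime power $q \geq 2$, the colon ideal $(x^{q-1}, y^{q-1}) :_R (x-y)$ is generated by $y^{q-1}$ and $\gamma = x^{q-2} + x^{q-3}y + \cdots + xy^{q-3} + y^{q-2}$. -/
open MvPolynomial

/-!
With `γ = ∑ xⁱ yⁿ⁻¹⁻ⁱ` we have `γ (x - y) = xⁿ - yⁿ`, so `γ` lies in the colon ideal; conversely,
if `g (x - y) = a xⁿ + b yⁿ` then `(g + b γ) yⁿ` is a multiple of `xⁿ`, and since the prime `x` does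
not divide `y`, already `g + b γ` is, say `c xⁿ`, which writes `g = c yⁿ + (c (x - y) - b) γ`.
In `A[x,y]` over a domain, `x` is prime and does not divide `y`.
-/

theorem Ideal.colon_span_pow_pow_sub_eq {R : Type*} [CommRing R] [IsDomain R] {x y : R}
    (hx : Prime x) (hxy : ¬ x ∣ y) (n : ℕ) :
    (Ideal.span {x ^ n, y ^ n}).colon (Ideal.span {x - y} : Set R) =
      Ideal.span {y ^ n, ∑ i ∈ Finset.range n, x ^ i * y ^ (n - 1 - i)} := by
  set γ := ∑ i ∈ Finset.range n, x ^ i * y ^ (n - 1 - i)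
  have hγ : γ * (x - y) = x ^ n - y ^ n := geom_sum₂_mul x y n
  apply le_antisymm
  · intro g hg
    obtain ⟨a, b, hab⟩ := Ideal.mem_span_pair.mp (Ideal.mem_colon_span_singleton.mp hg)
    have hdvd : x ^ n ∣ (g + b * γ) * y ^ n :=
      ⟨g - a * γ, by linear_combination g * hγ + γ * hab⟩
    obtain ⟨c, hc⟩ :=
      hx.pow_dvd_of_dvd_mul_right n (fun h ↦ hxy (hx.dvd_of_dvd_pow h)) hdvd
    exact Ideal.mem_span_pair.mpr ⟨c, c * (x - y) - b, by linear_combination c * hγ - hc⟩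
  · rw [Ideal.span_le, Set.insert_subset_iff, Set.singleton_subset_iff, SetLike.mem_coe,
      SetLike.mem_coe, Ideal.mem_colon_span_singleton, Ideal.mem_colon_span_singleton, hγ]
    exact ⟨Ideal.mul_mem_right _ _ (Ideal.subset_span (by simp)),
      Ideal.sub_mem _ (Ideal.subset_span (by simp)) (Ideal.subset_span (by simp))⟩

theorem stmt_0_general (A : Type*) [CommRing A] [IsDomain A] (q : ℕ) :
    (Ideal.span {(X 0 : MvPolynomial (Fin 2) A) ^ (q - 1), X 1 ^ (q - 1)}).colon
        ((Ideal.span {X 0 - X 1} : Ideal (MvPolynomial (Fin 2) A)) : Set (MvPolynomial (Fin 2) A)) =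
      Ideal.span {(X 1 : MvPolynomial (Fin 2) A) ^ (q - 1),
        ∑ i ∈ Finset.range (q - 1), X 0 ^ i * X 1 ^ (q - 2 - i)} := by
  have hndvd : ¬ (X 0 : MvPolynomial (Fin 2) A) ∣ X 1 := by simp
  rw [Ideal.colon_span_pow_pow_sub_eq X_prime hndvd, Nat.sub_sub]

/-- Over a domain `A`, in `R = A[x,y]`, the colon ideal `(x^(q-1), y^(q-1)) : (x-y)`
is generated by `y^(q-1)` and `γ = ∑_{i=0}^{q-2} x^i y^(q-2-i)`. -/
theorem stmt_0 (A : Type*) [CommRing A] [IsDomain A] (q : ℕ) (hq : 2 ≤ q) :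
    (Ideal.span {(X 0 : MvPolynomial (Fin 2) A) ^ (q - 1), X 1 ^ (q - 1)}).colon
        ((Ideal.span {X 0 - X 1} : Ideal (MvPolynomial (Fin 2) A)) : Set (MvPolynomial (Fin 2) A)) =
      Ideal.span {(X 1 : MvPolynomial (Fin 2) A) ^ (q - 1),
        ∑ i ∈ Finset.range (q - 1), X 0 ^ i * X 1 ^ (q - 2 - i)} :=
  stmt_0_general A q
end

section
/- Let $k$ be a field of characteristic $p > 0$, $A = k[t]$, $R = A[x,y]$, $q = p^e$ for $e \geq 1$, and $F = xy(x-y)(x-ty)$. Let $G = xy(x-y)y^{q-2}$ and $\tau = 1 + t + \cdots + t^{q-2}$. Then $\tau \cdot G \in (x^q, y^q, F)$. -/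
open MvPolynomial

/-- In `R = k[t][x,y]` with `k` of characteristic `p > 0`, `q = p^e`,
`F = xy(x-y)(x-ty)`, `G = xy(x-y)y^(q-2)` and `τ = 1 + t + ⋯ + t^(q-2)`,
we have `τ·G ∈ (x^q, y^q, F)`. -/
theorem stmt_2 (k : Type*) [Field k] (p : ℕ) [Fact p.Prime] [CharP k p]
    (e : ℕ) (he : 1 ≤ e) (q : ℕ) (hq : q = p ^ e) :
    (C (∑ i ∈ Finset.range (q - 1), (Polynomial.X : Polynomial k) ^ i) *
        (X 0 * X 1 * (X 0 - X 1) * X 1 ^ (q - 2)) : MvPolynomial (Fin 2) (Polynomial k)) ∈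
      Ideal.span {(X 0 : MvPolynomial (Fin 2) (Polynomial k)) ^ q, X 1 ^ q,
        X 0 * X 1 * (X 0 - X 1) * (X 0 - C Polynomial.X * X 1)} := by
  have hp : p.Prime := Fact.out
  have hq2 : 2 ≤ q := by
    have : 1 < p ^ e := Nat.one_lt_pow (by omega) hp.one_lt
    omega
  set x : MvPolynomial (Fin 2) (Polynomial k) := X 0 with hx
  set y : MvPolynomial (Fin 2) (Polynomial k) := X 1 with hy
  set t : MvPolynomial (Fin 2) (Polynomial k) := C Polynomial.X with htt
  have hC : (C (∑ i ∈ Finset.range (q - 1), (Polynomial.X : Polynomial k) ^ i) :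
      MvPolynomial (Fin 2) (Polynomial k)) = ∑ i ∈ Finset.range (q - 1), t ^ i := by
    rw [map_sum]
    simp [htt]
  rw [hC]
  -- powers lemmas
  have hxq : x ^ (q - 1) * x = x ^ q := by
    rw [← pow_succ]; congr 1; omega
  have hyq : y ^ (q - 1) * y = y ^ q := by
    rw [← pow_succ]; congr 1; omega
  -- the geometric sum identity
  have hgeom : (∑ i ∈ Finset.range (q - 1), x ^ i * y ^ (q - 1 - 1 - i)) * (x - y)
      = x ^ (q - 1) - y ^ (q - 1) := geom_sum₂_mul x y (q - 1)
  have hq11 : ∀ i, q - 1 - 1 - i = q - 2 - i := fun i => by omega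
  simp only [hq11] at hgeom
  -- the main algebraic identity
  have main : (∑ i ∈ Finset.range (q - 1), t ^ i) * (x * y * (x - y) * y ^ (q - 2))
      = (x ^ q * y - x * y ^ q) -
        ∑ i ∈ Finset.range (q - 1),
          ((x ^ i - (t * y) ^ i) * (y ^ (q - 2 - i) * (x * y * (x - y)))) := by
    rw [Finset.sum_mul]
    have h1 : ∀ i ∈ Finset.range (q - 1),
        t ^ i * (x * y * (x - y) * y ^ (q - 2)) =
          x ^ i * y ^ (q - 2 - i) * (x * y * (x - y)) -
            (x ^ i - (t * y) ^ i) * (y ^ (q - 2 - i) * (x * y * (x - y))) := by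
      intro i hi
      simp only [Finset.mem_range] at hi
      obtain ⟨m, hm1, hm2⟩ : ∃ m, q - 2 - i = m ∧ q - 2 = m + i := ⟨q - 2 - i, rfl, by omega⟩
      rw [hm1, hm2, pow_add, mul_pow]
      ring
    rw [Finset.sum_congr rfl h1, Finset.sum_sub_distrib]
    congr 1
    calc ∑ i ∈ Finset.range (q - 1), x ^ i * y ^ (q - 2 - i) * (x * y * (x - y))
        = ((∑ i ∈ Finset.range (q - 1), x ^ i * y ^ (q - 2 - i)) * (x - y)) * (x * y) := by
          rw [Finset.sum_mul, Finset.sum_mul]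
          exact Finset.sum_congr rfl fun i _ => by ring
      _ = (x ^ (q - 1) - y ^ (q - 1)) * (x * y) := by rw [hgeom]
      _ = (x ^ (q - 1) * x) * y - (y ^ (q - 1) * y) * x := by ring
      _ = x ^ q * y - x * y ^ q := by rw [hxq, hyq]; ring
  rw [main]
  have hmemx : (x ^ q : MvPolynomial (Fin 2) (Polynomial k)) ∈
      Ideal.span {x ^ q, y ^ q, x * y * (x - y) * (x - t * y)} :=
    Ideal.subset_span (by simp)
  have hmemy : (y ^ q : MvPolynomial (Fin 2) (Polynomial k)) ∈
      Ideal.span {x ^ q, y ^ q, x * y * (x - y) * (x - t * y)} :=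
    Ideal.subset_span (by simp)
  have hmemF : (x * y * (x - y) * (x - t * y) : MvPolynomial (Fin 2) (Polynomial k)) ∈
      Ideal.span {x ^ q, y ^ q, x * y * (x - y) * (x - t * y)} :=
    Ideal.subset_span (by simp)
  apply Ideal.sub_mem
  · exact Ideal.sub_mem _ (Ideal.mul_mem_right _ _ hmemx) (Ideal.mul_mem_left _ _ hmemy)
  · apply Ideal.sum_mem
    intro i _
    have hdvd : (x * y * (x - y) * (x - t * y)) ∣
        (x ^ i - (t * y) ^ i) * (y ^ (q - 2 - i) * (x * y * (x - y))) := by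
      obtain ⟨c, hc⟩ := sub_dvd_pow_sub_pow x (t * y) i
      exact ⟨c * y ^ (q - 2 - i), by rw [hc]; ring⟩
    obtain ⟨c, hc⟩ := hdvd
    rw [hc]
    exact Ideal.mul_mem_right _ _ hmemF
end

section
/- Let $k$ be a field of characteristic $p > 0$, $A = k[t]$, $R = A[x,y]$, $q = p^e$ for $e \geq 1$ with $q > 2$, and $F = xy(x-y)(x-ty)$. Then $G = xy(x-y)y^{q-2} \notin (x^q, y^q, F)$. -/
open MvPolynomial

-- pair helpers
lemma pair_apply0 (a b : ℕ) : (Finsupp.single (0:Fin 2) a + Finsupp.single (1:Fin 2) b) 0 = a := by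
  simp [Finsupp.single_apply]

lemma pair_apply1 (a b : ℕ) : (Finsupp.single (0:Fin 2) a + Finsupp.single (1:Fin 2) b) 1 = b := by
  simp [Finsupp.single_apply]

lemma pair_eq {a b a' b' : ℕ} :
    Finsupp.single (0:Fin 2) a + Finsupp.single (1:Fin 2) b =
      Finsupp.single (0:Fin 2) a' + Finsupp.single (1:Fin 2) b' ↔ a = a' ∧ b = b' := by
  constructor
  · intro h
    constructor
    · have := DFunLike.congr_fun h 0
      simpa [pair_apply0] using this
    · have := DFunLike.congr_fun h 1
      simpa [pair_apply1] using this
  · rintro ⟨rfl, rfl⟩; rfl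

lemma pair_le {a b a' b' : ℕ} :
    Finsupp.single (0:Fin 2) a + Finsupp.single (1:Fin 2) b ≤
      Finsupp.single (0:Fin 2) a' + Finsupp.single (1:Fin 2) b' ↔ a ≤ a' ∧ b ≤ b' := by
  rw [Finsupp.le_def]
  constructor
  · intro h
    exact ⟨by simpa [pair_apply0] using h 0, by simpa [pair_apply1] using h 1⟩
  · rintro ⟨h1, h2⟩ i
    fin_cases i
    · simpa [pair_apply0] using h1
    · simpa [pair_apply1] using h2

lemma pair_sub {a b a' b' : ℕ} :
    (Finsupp.single (0:Fin 2) a + Finsupp.single (1:Fin 2) b) -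
      (Finsupp.single (0:Fin 2) a' + Finsupp.single (1:Fin 2) b') =
      Finsupp.single (0:Fin 2) (a - a') + Finsupp.single (1:Fin 2) (b - b') := by
  ext i
  fin_cases i
  · simp [Finsupp.tsub_apply, pair_apply0]
  · simp [Finsupp.tsub_apply, pair_apply1]

lemma sum_tele {S : Type*} [CommRing S] (T : S) (c : ℕ → S) (n : ℕ) :
    ∑ j ∈ Finset.range (n+1),
      ((T^(j+2) - T) * ((if 1 ≤ j then c (j-1) else 0) - (1+T) * c j + T * c (j+1)))
    = (T - T^(n+3)) * c n + (T^(n+2) - T) * T * c (n+1) := by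
  induction n with
  | zero => rw [Finset.sum_range_one, if_neg (by omega)]; ring
  | succ n ih =>
      rw [Finset.sum_range_succ, ih, if_pos (by omega)]
      have h : n + 1 - 1 = n := by omega
      rw [h]
      ring

/-- the monomial index `(j+2, r+2-j)` -/
noncomputable def μm (r j : ℕ) : Fin 2 →₀ ℕ := Finsupp.single 0 (j+2) + Finsupp.single 1 (r+2-j)

/-- the antidiagonal coefficients of the cofactor of `F` -/
noncomputable def cD {k : Type*} [CommRing k] (D : MvPolynomial (Fin 2) (Polynomial k))
    (r j : ℕ) : Polynomial k :=
  if j ≤ r then MvPolynomial.coeff (Finsupp.single 0 j + Finsupp.single 1 (r-j)) D else 0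

lemma monomial_pair {k : Type*} [CommRing k] (a b : ℕ) (co : Polynomial k) :
    (monomial (Finsupp.single (0:Fin 2) a + Finsupp.single 1 b) co) =
      C co * X 0 ^ a * X 1 ^ b := by
  rw [X_pow_eq_monomial, X_pow_eq_monomial, C_mul_monomial, monomial_mul, mul_one, mul_one]

lemma main_aux {k : Type*} [Field k] (r : ℕ)
    (A B D : MvPolynomial (Fin 2) (Polynomial k))
    (hG : (X 0 * X 1 * (X 0 - X 1) * X 1 ^ (r+1) : MvPolynomial (Fin 2) (Polynomial k)) =
      A * X 0 ^ (r+3) + (B * X 1 ^ (r+3) +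
        D * (X 0 * X 1 * (X 0 - X 1) * (X 0 - C Polynomial.X * X 1)))) : False := by
  set T : Polynomial k := Polynomial.X with hT
  set G : MvPolynomial (Fin 2) (Polynomial k) := X 0 * X 1 * (X 0 - X 1) * X 1 ^ (r+1) with hGdef
  set F : MvPolynomial (Fin 2) (Polynomial k) :=
    X 0 * X 1 * (X 0 - X 1) * (X 0 - C T * X 1) with hFdef
  -- G as difference of monomials
  have hGmon : G = monomial (Finsupp.single (0:Fin 2) 2 + Finsupp.single 1 (r+2)) (1 : Polynomial k)
      - monomial (Finsupp.single (0:Fin 2) 1 + Finsupp.single 1 (r+3)) (1 : Polynomial k) := by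
    rw [monomial_pair, monomial_pair, hGdef]
    simp only [map_one]
    ring
  -- F as sum of monomials
  have hFmon : F = monomial (Finsupp.single (0:Fin 2) 3 + Finsupp.single 1 1) (1 : Polynomial k)
      + monomial (Finsupp.single (0:Fin 2) 2 + Finsupp.single 1 2) (-(1+T))
      + monomial (Finsupp.single (0:Fin 2) 1 + Finsupp.single 1 3) T := by
    rw [monomial_pair, monomial_pair, monomial_pair, hFdef]
    simp only [map_one, map_neg, map_add]
    ring
  -- claim 1 : coefficients of G
  have claim1 : ∀ j ≤ r, MvPolynomial.coeff (μm r j) G = if j = 0 then 1 else 0 := by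
    intro j hj
    rw [hGmon, MvPolynomial.coeff_sub, coeff_monomial, coeff_monomial, μm]
    rcases eq_or_ne j 0 with rfl | hj0
    · rw [if_pos (pair_eq.mpr ⟨by omega, by omega⟩), if_neg, if_pos rfl]
      · ring
      · intro hcon
        exact absurd (pair_eq.mp hcon).1 (by omega)
    · rw [if_neg, if_neg, if_neg hj0]
      · ring
      · intro hcon; exact absurd (pair_eq.mp hcon).1 (by omega)
      · intro hcon; exact absurd (pair_eq.mp hcon).1 (by omega)
  -- claim 2/3 : coefficients of A * X0^q, B * X1^q vanish
  have claim2 : ∀ j ≤ r, MvPolynomial.coeff (μm r j) (A * X 0 ^ (r+3)) = 0 := by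
    intro j hj
    rw [X_pow_eq_monomial, coeff_mul_monomial', if_neg]
    intro hle
    rw [show (Finsupp.single (0:Fin 2) (r+3)) =
      Finsupp.single (0:Fin 2) (r+3) + Finsupp.single 1 0 by simp, μm] at hle
    exact absurd (pair_le.mp hle).1 (by omega)
  have claim3 : ∀ j ≤ r, MvPolynomial.coeff (μm r j) (B * X 1 ^ (r+3)) = 0 := by
    intro j hj
    rw [X_pow_eq_monomial, coeff_mul_monomial', if_neg]
    intro hle
    rw [show (Finsupp.single (1:Fin 2) (r+3)) =
      Finsupp.single (0:Fin 2) 0 + Finsupp.single 1 (r+3) by simp, μm] at hle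
    exact absurd (pair_le.mp hle).2 (by omega)
  -- claim 4 : coefficients of D * F
  have claim4 : ∀ j ≤ r, MvPolynomial.coeff (μm r j) (D * F) =
      (if 1 ≤ j then cD D r (j-1) else 0) - (1+T) * cD D r j + T * cD D r (j+1) := by
    intro j hj
    rw [hFmon, mul_add, mul_add, MvPolynomial.coeff_add, MvPolynomial.coeff_add,
      coeff_mul_monomial', coeff_mul_monomial', coeff_mul_monomial', μm]
    -- term 1
    have t1 : (if (Finsupp.single (0:Fin 2) 3 + Finsupp.single 1 1) ≤
        Finsupp.single (0:Fin 2) (j+2) + Finsupp.single 1 (r+2-j) then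
        MvPolynomial.coeff ((Finsupp.single (0:Fin 2) (j+2) + Finsupp.single 1 (r+2-j)) -
          (Finsupp.single (0:Fin 2) 3 + Finsupp.single 1 1)) D * 1 else 0)
        = (if 1 ≤ j then cD D r (j-1) else 0) := by
      rcases Nat.lt_or_ge j 1 with hj1 | hj1
      · rw [if_neg, if_neg (by omega)]
        intro hle
        exact absurd (pair_le.mp hle).1 (by omega)
      · rw [if_pos (pair_le.mpr ⟨by omega, by omega⟩), if_pos hj1, pair_sub,
          show (j+2)-3 = j-1 by omega, show (r+2-j)-1 = r-(j-1) by omega,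
          cD, if_pos (by omega), mul_one]
    -- term 2
    have t2 : (if (Finsupp.single (0:Fin 2) 2 + Finsupp.single 1 2) ≤
        Finsupp.single (0:Fin 2) (j+2) + Finsupp.single 1 (r+2-j) then
        MvPolynomial.coeff ((Finsupp.single (0:Fin 2) (j+2) + Finsupp.single 1 (r+2-j)) -
          (Finsupp.single (0:Fin 2) 2 + Finsupp.single 1 2)) D * (-(1+T)) else 0)
        = -((1+T) * cD D r j) := by
      rw [if_pos (pair_le.mpr ⟨by omega, by omega⟩), pair_sub,
        show (j+2)-2 = j by omega, show (r+2-j)-2 = r-j by omega,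
        cD, if_pos hj]
      ring
    -- term 3
    have t3 : (if (Finsupp.single (0:Fin 2) 1 + Finsupp.single 1 3) ≤
        Finsupp.single (0:Fin 2) (j+2) + Finsupp.single 1 (r+2-j) then
        MvPolynomial.coeff ((Finsupp.single (0:Fin 2) (j+2) + Finsupp.single 1 (r+2-j)) -
          (Finsupp.single (0:Fin 2) 1 + Finsupp.single 1 3)) D * T else 0)
        = T * cD D r (j+1) := by
      rcases Nat.lt_or_ge r (j+1) with hjr | hjr
      · rw [if_neg, cD, if_neg (by omega), mul_zero]
        intro hle
        exact absurd (pair_le.mp hle).2 (by omega)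
      · rw [if_pos (pair_le.mpr ⟨by omega, by omega⟩), pair_sub,
          show (j+2)-1 = j+1 by omega, show (r+2-j)-3 = r-(j+1) by omega,
          cD, if_pos hjr]
        ring
    rw [t1, t2, t3]
    ring
  -- the weighted sum of coefficients
  have key : (T^2 - T : Polynomial k) = (T - T^(r+3)) * cD D r r := by
    have e1 : ∑ j ∈ Finset.range (r+1), (T^(j+2) - T) * MvPolynomial.coeff (μm r j) G
        = T^2 - T := by
      rw [Finset.sum_congr rfl (fun j hj => by
        rw [claim1 j (Nat.lt_succ_iff.mp (Finset.mem_range.mp hj))])]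
      rw [Finset.sum_eq_single 0 (fun b _ hb => by rw [if_neg hb, mul_zero])
        (fun h => absurd (Finset.mem_range.mpr (by omega)) h)]
      simp
    have e2 : ∑ j ∈ Finset.range (r+1), (T^(j+2) - T) * MvPolynomial.coeff (μm r j) G
        = ∑ j ∈ Finset.range (r+1), (T^(j+2) - T) *
          ((if 1 ≤ j then cD D r (j-1) else 0) - (1+T) * cD D r j + T * cD D r (j+1)) := by
      refine Finset.sum_congr rfl (fun j hj => ?_)
      have hjr : j ≤ r := Nat.lt_succ_iff.mp (Finset.mem_range.mp hj)
      rw [hG, MvPolynomial.coeff_add, MvPolynomial.coeff_add, claim2 j hjr, claim3 j hjr,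
        claim4 j hjr, zero_add, zero_add]
    have e3 := sum_tele T (cD D r) r
    have e4 : cD D r (r+1) = 0 := by rw [cD, if_neg (by omega)]
    rw [← e1, e2, e3, e4, mul_zero, add_zero]
  -- contradiction via degrees
  have h2T : (T^2 - T : Polynomial k) ≠ 0 := by
    intro h
    have := congrArg (fun P => Polynomial.coeff P 2) h
    simp [hT, Polynomial.coeff_X] at this
  have hcne : cD D r r ≠ 0 := by
    intro h
    rw [h, mul_zero] at key
    exact h2T key
  have hdeg1 : (T - T^(r+3) : Polynomial k).natDegree = r+3 := by
    rw [hT]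
    compute_degree!
  have hTne : (T - T^(r+3) : Polynomial k) ≠ 0 := by
    intro h
    rw [h] at hdeg1
    simp at hdeg1
  have hdeg2 : (T^2 - T : Polynomial k).natDegree = 2 := by
    rw [hT]
    compute_degree!
  have := congrArg Polynomial.natDegree key
  rw [hdeg2, Polynomial.natDegree_mul hTne hcne, hdeg1] at this
  omega

/-- In `R = k[t][x,y]` with `k` of characteristic `p > 0`, `q = p^e > 2`, and
`F = xy(x-y)(x-ty)`, the element `G = xy(x-y)y^(q-2)` is not in `(x^q, y^q, F)`. -/
theorem stmt_3 (k : Type*) [Field k] (p : ℕ) [Fact p.Prime] [CharP k p]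
    (e : ℕ) (he : 1 ≤ e) (q : ℕ) (hq : q = p ^ e) (hq2 : 2 < q) :
    (X 0 * X 1 * (X 0 - X 1) * X 1 ^ (q - 2) : MvPolynomial (Fin 2) (Polynomial k)) ∉
      Ideal.span {(X 0 : MvPolynomial (Fin 2) (Polynomial k)) ^ q, X 1 ^ q,
        X 0 * X 1 * (X 0 - X 1) * (X 0 - C Polynomial.X * X 1)} := by
  intro hmem
  obtain ⟨r, hr⟩ : ∃ r, q = r + 3 := ⟨q - 3, by omega⟩
  subst hr
  rw [show r + 3 - 2 = r + 1 by omega] at hmem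
  rw [Ideal.mem_span_insert] at hmem
  obtain ⟨A, z, hz, hGz⟩ := hmem
  rw [Ideal.mem_span_insert] at hz
  obtain ⟨B, w, hw, hzw⟩ := hz
  rw [Ideal.mem_span_singleton'] at hw
  obtain ⟨D, hD⟩ := hw
  subst hzw
  rw [← hD] at hGz
  exact main_aux r A B D (by rw [hGz])
end

section
/- Let $k$ be a field of characteristic $p > 0$, $R = k[t][x,y]$, $q = p^e$ with $q > 2$, and $F = xy(x-y)(x-ty)$. If $d \in k[t]$ satisfies $d \cdot xy(x-y)y^{q-2} \in (x^q, y^q, F)$, then $\tau = 1 + t + \cdots + t^{q-2}$ divides $d$ in $k[t]$. -/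
open MvPolynomial

namespace Stmt4Aux

variable {k : Type*} [Field k]

noncomputable def s (a b : ℕ) : Fin 2 →₀ ℕ := Finsupp.single 0 a + Finsupp.single 1 b

@[simp] lemma s_apply_zero (a b : ℕ) : s a b 0 = a := by
  simp [s, Finsupp.single_apply]

@[simp] lemma s_apply_one (a b : ℕ) : s a b 1 = b := by
  simp [s, Finsupp.single_apply]

lemma s_eq_iff (a b a' b' : ℕ) : s a b = s a' b' ↔ a = a' ∧ b = b' := by
  constructor
  · intro h
    exact ⟨by simpa using DFunLike.congr_fun h 0, by simpa using DFunLike.congr_fun h 1⟩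
  · rintro ⟨rfl, rfl⟩; rfl

lemma s_le_iff (a b a' b' : ℕ) : s a b ≤ s a' b' ↔ a ≤ a' ∧ b ≤ b' := by
  rw [Finsupp.le_def, Fin.forall_fin_two]
  simp

lemma s_sub (a b a' b' : ℕ) : s a b - s a' b' = s (a - a') (b - b') := by
  apply Finsupp.ext
  rw [Fin.forall_fin_two]
  exact ⟨by simp [Finsupp.tsub_apply], by simp [Finsupp.tsub_apply]⟩

lemma monomial_s (a b : ℕ) (r : Polynomial k) :
    (C r * X 0 ^ a * X 1 ^ b : MvPolynomial (Fin 2) (Polynomial k)) = monomial (s a b) r := by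
  rw [X_pow_eq_monomial, X_pow_eq_monomial, mul_assoc, monomial_mul, one_mul, C_mul_monomial,
    mul_one, s]

noncomputable def Df (c : MvPolynomial (Fin 2) (Polynomial k)) (n : ℕ) : ℕ → Polynomial k
  | 0 => 0
  | (i + 1) => coeff (s (n - i) i) c

@[simp] lemma Df_zero (c : MvPolynomial (Fin 2) (Polynomial k)) (n : ℕ) : Df c n 0 = 0 := rfl

lemma Df_succ (c : MvPolynomial (Fin 2) (Polynomial k)) (n i : ℕ) :
    Df c n (i + 1) = coeff (s (n - i) i) c := rfl

end Stmt4Aux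

open Stmt4Aux

/-- In `R = k[t][x,y]` with `k` of characteristic `p > 0`, `q = p^e > 2`, and
`F = xy(x-y)(x-ty)`: if `d ∈ k[t]` satisfies `d·xy(x-y)y^(q-2) ∈ (x^q, y^q, F)`,
then `τ = 1 + t + ⋯ + t^(q-2)` divides `d` in `k[t]`. -/
theorem stmt_4 (k : Type*) [Field k] (p : ℕ) [Fact p.Prime] [CharP k p]
    (e : ℕ) (he : 1 ≤ e) (q : ℕ) (hq : q = p ^ e) (hq2 : 2 < q)
    (d : Polynomial k)
    (hd : (C d * (X 0 * X 1 * (X 0 - X 1) * X 1 ^ (q - 2)) :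
        MvPolynomial (Fin 2) (Polynomial k)) ∈
      Ideal.span {(X 0 : MvPolynomial (Fin 2) (Polynomial k)) ^ q, X 1 ^ q,
        X 0 * X 1 * (X 0 - X 1) * (X 0 - C Polynomial.X * X 1)}) :
    (∑ i ∈ Finset.range (q - 1), (Polynomial.X : Polynomial k) ^ i) ∣ d := by
  obtain ⟨n, rfl⟩ : ∃ n, q = n + 3 := ⟨q - 3, by omega⟩
  clear hq hq2 he
  set t : Polynomial k := Polynomial.X with ht
  rw [Ideal.mem_span_insert] at hd
  obtain ⟨f, z, hz, hE⟩ := hd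
  rw [Ideal.mem_span_insert] at hz
  obtain ⟨g, w, hw, hz'⟩ := hz
  rw [Ideal.mem_span_singleton'] at hw
  obtain ⟨c, hc⟩ := hw
  rw [hz', ← hc] at hE
  rw [show n + 3 - 2 = n + 1 from by omega] at hE
  have e1 : (C d * (X 0 * X 1 * (X 0 - X 1) * X 1 ^ (n + 1)) :
      MvPolynomial (Fin 2) (Polynomial k))
      = monomial (s 2 (n + 2)) d - monomial (s 1 (n + 3)) d := by
    rw [← monomial_s, ← monomial_s]
    ring
  have e2 : (X 0 : MvPolynomial (Fin 2) (Polynomial k)) ^ (n + 3)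
      = monomial (s (n + 3) 0) (1 : Polynomial k) := by
    rw [← monomial_s, map_one, one_mul, pow_zero, mul_one]
  have e3 : (X 1 : MvPolynomial (Fin 2) (Polynomial k)) ^ (n + 3)
      = monomial (s 0 (n + 3)) (1 : Polynomial k) := by
    rw [← monomial_s, map_one, one_mul, pow_zero, one_mul]
  have e4 : (X 0 * X 1 * (X 0 - X 1) * (X 0 - C t * X 1) :
      MvPolynomial (Fin 2) (Polynomial k))
      = monomial (s 3 1) 1 + monomial (s 2 2) (-(1 + t)) + monomial (s 1 3) t := by
    rw [← monomial_s, ← monomial_s, ← monomial_s]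
    simp only [map_one, map_neg, map_add]
    ring
  rw [e1, e2, e3, e4, mul_add, mul_add] at hE
  -- key coefficient identities
  have key : ∀ i, i ≤ n →
      (if i = n then d else 0)
      = (if i < n then Df c n (i + 2) else 0) - Df c n (i + 1) * (1 + t) + Df c n i * t := by
    intro i hi
    have h := congrArg (MvPolynomial.coeff (s (n + 2 - i) (i + 2))) hE
    simp only [coeff_sub, coeff_add, coeff_mul_monomial', coeff_monomial, mul_one, s_sub,
      s_le_iff, s_eq_iff] at h
    have hC : (if 2 = n + 2 - i ∧ n + 2 = i + 2 then d else 0) = (if i = n then d else 0) := by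
      by_cases h' : i = n
      · subst h'; rw [if_pos (by omega), if_pos rfl]
      · rw [if_neg (by omega), if_neg h']
    have hA : (if 3 ≤ n + 2 - i ∧ 1 ≤ i + 2 then
          MvPolynomial.coeff (s (n + 2 - i - 3) (i + 2 - 1)) c else 0)
        = (if i < n then Df c n (i + 2) else 0) := by
      by_cases h' : i < n
      · rw [if_pos (by omega), if_pos h', show n + 2 - i - 3 = n - (i + 1) from by omega,
          show i + 2 - 1 = i + 1 from by omega, Df_succ]
      · rw [if_neg (by omega), if_neg h']
    have hB : (if 1 ≤ n + 2 - i ∧ 3 ≤ i + 2 then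
          MvPolynomial.coeff (s (n + 2 - i - 1) (i + 2 - 3)) c * t else 0)
        = Df c n i * t := by
      obtain _ | m := i
      · rw [if_neg (by omega), Df_zero, zero_mul]
      · rw [if_pos (by omega), show n + 2 - (m + 1) - 1 = n - m from by omega,
          show m + 1 + 2 - 3 = m from by omega, Df_succ]
    rw [hC, hA, hB,
      if_neg (show ¬(1 = n + 2 - i ∧ n + 3 = i + 2) from by omega),
      if_neg (show ¬(n + 3 ≤ n + 2 - i ∧ 0 ≤ i + 2) from by omega),
      if_neg (show ¬(0 ≤ n + 2 - i ∧ n + 3 ≤ i + 2) from by omega),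
      if_pos (show 2 ≤ n + 2 - i ∧ 2 ≤ i + 2 from by omega),
      show n + 2 - i - 2 = n - i from by omega, show i + 2 - 2 = i from by omega,
      ← Df_succ] at h
    linear_combination h
  have step : ∀ i, i < n → Df c n (i + 2) = Df c n (i + 1) * (1 + t) - Df c n i * t := by
    intro i hin
    have h := key i (le_of_lt hin)
    rw [if_neg (Nat.ne_of_lt hin), if_pos hin] at h
    linear_combination -h
  have final : d = -(Df c n (n + 1) * (1 + t)) + Df c n n * t := by
    have h := key n le_rfl
    rw [if_pos rfl, if_neg (lt_irrefl n)] at h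
    linear_combination h
  have tele : ∀ i, i ≤ n → Df c n (i + 1) = t * Df c n i + Df c n 1 := by
    intro i hi
    induction i with
    | zero => simp
    | succ i ih =>
      have hs := step i (by omega)
      linear_combination hs + ih (by omega)
  have geo : ∀ i, i ≤ n → Df c n (i + 1) = (∑ j ∈ Finset.range (i + 1), t ^ j) * Df c n 1 := by
    intro i hi
    induction i with
    | zero => simp
    | succ i ih =>
      rw [tele (i + 1) hi, ih (by omega), geom_sum_succ (x := t) (n := i + 1)]
      ring
  refine ⟨-Df c n 1, ?_⟩
  rw [show n + 3 - 1 = n + 2 from by omega]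
  have hσ : (∑ j ∈ Finset.range (n + 2), t ^ j)
      = t * (∑ j ∈ Finset.range (n + 1), t ^ j) + 1 := geom_sum_succ
  linear_combination final - tele n le_rfl - t * geo n le_rfl + Df c n 1 * hσ
end

section
/- Let $A$ be an integral domain and $R = A[x,y]$. Suppose $a(x-y) = bx^{q-1} + cy^{q-1}$ for $a, b, c \in R$ and $q \geq 2$. Then there exists $d \in R$ with $c = -b + d(x-y)$ and $a - dy^{q-1} = b\gamma$, where $\gamma = \sum_{i=0}^{q-2} x^i y^{q-2-i}$. In particular $a \in (y^{q-1}, \gamma)$. -/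
open MvPolynomial

/-- Over a domain `A`, in `R = A[x,y]`: if `a(x-y) = b x^(q-1) + c y^(q-1)`, then there is
`d ∈ R` with `c = -b + d(x-y)` and `a - d y^(q-1) = b γ`, where
`γ = ∑_{i=0}^{q-2} x^i y^(q-2-i)`; in particular `a ∈ (y^(q-1), γ)`. -/
theorem stmt_5 (A : Type*) [CommRing A] [IsDomain A] (q : ℕ) (hq : 2 ≤ q)
    (a b c : MvPolynomial (Fin 2) A)
    (h : a * (X 0 - X 1) = b * X 0 ^ (q - 1) + c * X 1 ^ (q - 1)) :
    ∃ d : MvPolynomial (Fin 2) A,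
      c = -b + d * (X 0 - X 1) ∧
      a - d * X 1 ^ (q - 1) =
        b * ∑ i ∈ Finset.range (q - 1), X 0 ^ i * X 1 ^ (q - 2 - i) ∧
      a ∈ Ideal.span {(X 1 : MvPolynomial (Fin 2) A) ^ (q - 1),
        ∑ i ∈ Finset.range (q - 1), X 0 ^ i * X 1 ^ (q - 2 - i)} := by
  set γ : MvPolynomial (Fin 2) A :=
    ∑ i ∈ Finset.range (q - 1), X 0 ^ i * X 1 ^ (q - 2 - i) with hγdef
  have hγ : γ * (X 0 - X 1) = X 0 ^ (q - 1) - X 1 ^ (q - 1) := by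
    rw [hγdef, ← geom_sum₂_mul (X 0 : MvPolynomial (Fin 2) A) (X 1) (q - 1)]
    simp_rw [show q - 1 - 1 = q - 2 from by omega]
  -- key identity: (a - b*γ) * (x - y) = (b + c) * y^(q-1)
  have key : (a - b * γ) * (X 0 - X 1) = (b + c) * X 1 ^ (q - 1) := by
    have := hγ
    ring_nf
    ring_nf at h this
    linear_combination h - b * this
  set e := MvPolynomial.finSuccEquiv A 1
  have he0 : e (X 0) = Polynomial.X := finSuccEquiv_X_zero
  have he1 : e (X 1) = Polynomial.C (X 0) := finSuccEquiv_X_succ (j := 0)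
  -- (x - y) divides (b + c)
  have hdvd : (X 0 - X 1 : MvPolynomial (Fin 2) A) ∣ (b + c) := by
    have h2 : (Polynomial.X - Polynomial.C (X 0 : MvPolynomial (Fin 1) A)) ∣
        e (b + c) * Polynomial.C ((X 0 : MvPolynomial (Fin 1) A) ^ (q - 1)) := by
      rw [map_add]
      refine ⟨e a - e b * e γ, ?_⟩
      have := congrArg e key
      simp only [map_mul, map_add, map_sub, map_pow, he0, he1] at this
      rw [← Polynomial.C_pow] at this
      linear_combination -this
    rw [Polynomial.dvd_iff_isRoot, Polynomial.IsRoot, Polynomial.eval_mul,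
      Polynomial.eval_C] at h2
    have hx : ((X 0 : MvPolynomial (Fin 1) A) ^ (q - 1)) ≠ 0 := pow_ne_zero _ (X_ne_zero 0)
    have h3 : Polynomial.eval (X 0 : MvPolynomial (Fin 1) A) (e (b + c)) = 0 :=
      (mul_eq_zero.1 h2).resolve_right hx
    have h4 : (Polynomial.X - Polynomial.C (X 0 : MvPolynomial (Fin 1) A)) ∣ e (b + c) :=
      Polynomial.dvd_iff_isRoot.2 h3
    obtain ⟨u, hu⟩ := h4
    refine ⟨e.symm u, ?_⟩
    apply e.injective
    simp only [map_mul, map_sub, he0, he1, AlgEquiv.apply_symm_apply]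
    exact hu
  obtain ⟨d, hd⟩ := hdvd
  have hxy : (X 0 - X 1 : MvPolynomial (Fin 2) A) ≠ 0 := by
    intro h0
    have := congrArg e h0
    simp only [map_sub, he0, he1, map_zero] at this
    exact Polynomial.X_sub_C_ne_zero (X 0) this
  refine ⟨d, by linear_combination hd, ?_, ?_⟩
  · have : (a - b * γ - d * X 1 ^ (q - 1)) * (X 0 - X 1) = 0 := by
      linear_combination key + X 1 ^ (q - 1) * hd
    have := (mul_eq_zero.1 this).resolve_right hxy
    linear_combination this
  · have ha : a = d * X 1 ^ (q - 1) + b * γ := by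
      have : (a - b * γ - d * X 1 ^ (q - 1)) * (X 0 - X 1) = 0 := by
        linear_combination key + X 1 ^ (q - 1) * hd
      have := (mul_eq_zero.1 this).resolve_right hxy
      linear_combination this
    rw [ha]
    exact Ideal.add_mem _ (Ideal.mul_mem_left _ _ (Ideal.subset_span (by simp)))
      (Ideal.mul_mem_left _ _ (Ideal.subset_span (by simp)))
end

section
/- Let $A$ be an integral domain, $B \supseteq A$ a module-finite extension domain, and $\{M_i\}_i$ a sequence of $B$-modules. If there exists a non-zero $b \in B$ such that each localization $(M_i)_b$ is torsion-free over $B_b$, then there exists a non-zero $a \in A$ such that each $(M_i)_a$ is torsion-free over $A_a$. -/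
/-!
Over a domain `R`, the localization `M_s` is torsion-free over `R_s` exactly when every torsion
element of `M` is killed by a power of `s`. Since `b` is integral over `A`, it divides some
nonzero `a ∈ A`. An `A`-torsion element of `M` is `B`-torsion, hence killed by some `b ^ k`,
hence by `a ^ k`.
-/

section PowerTorsion

variable {R M : Type*}

theorem LocalizedModule.mk_powers_eq_zero_iff [CommSemiring R] [AddCommMonoid M] [Module R M]
    {s : R} (x : M) (t : Submonoid.powers s) :
    LocalizedModule.mk x t = 0 ↔ ∃ k : ℕ, s ^ k • x = 0 := by
  rw [IsLocalizedModule.mk_eq_mk', IsLocalizedModule.mk'_eq_zero']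
  constructor
  · rintro ⟨⟨_, k, rfl⟩, h⟩
    exact ⟨k, h⟩
  · rintro ⟨k, h⟩
    exact ⟨⟨s ^ k, k, rfl⟩, h⟩

theorem noZeroSMulDivisors_localizedModule_powers_iff [CommRing R] [IsDomain R]
    [AddCommGroup M] [Module R M] (s : R) :
    NoZeroSMulDivisors (Localization (Submonoid.powers s))
        (LocalizedModule (Submonoid.powers s) M) ↔
      ∀ r : R, r ≠ 0 → ∀ x : M, r • x = 0 → ∃ k : ℕ, s ^ k • x = 0 := by
  constructor
  · intro _ r hr x hrx
    have hsmul : algebraMap R (Localization (Submonoid.powers s)) r •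
        LocalizedModule.mk x (1 : Submonoid.powers s) = 0 := by
      rw [algebraMap_smul, LocalizedModule.smul'_mk, hrx, LocalizedModule.zero_mk]
    rcases eq_zero_or_eq_zero_of_smul_eq_zero hsmul with hr' | hx
    · obtain ⟨⟨_, k, rfl⟩, hk⟩ :=
        (IsLocalization.map_eq_zero_iff (Submonoid.powers s) _ r).mp hr'
      have hsk : s ^ k = 0 := (mul_eq_zero.mp hk).resolve_right hr
      exact ⟨k, by rw [hsk, zero_smul]⟩
    · exact (LocalizedModule.mk_powers_eq_zero_iff x 1).mp hx
  · intro htors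
    refine ⟨fun {c m} hcm => or_iff_not_imp_left.mpr fun hc => ?_⟩
    induction c using Localization.induction_on with | H p => ?_
    obtain ⟨u, t⟩ := p
    induction m using LocalizedModule.induction_on with | h x t' => ?_
    have hu : u ≠ 0 := by rintro rfl; exact hc (Localization.mk_zero t)
    rw [LocalizedModule.mk_smul_mk, LocalizedModule.mk_powers_eq_zero_iff] at hcm
    obtain ⟨k, hk⟩ := hcm
    rw [smul_smul] at hk
    rw [LocalizedModule.mk_powers_eq_zero_iff]
    by_cases hsk : s ^ k * u = 0
    · exact ⟨k, by rw [(mul_eq_zero.mp hsk).resolve_right hu, zero_smul]⟩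
    · exact htors _ hsk x hk

end PowerTorsion

/-- Let `A ⊆ B` be domains with `B` module-finite over `A`, and `{Mᵢ}` a sequence of
`B`-modules.  If some nonzero `b ∈ B` makes every localization `(Mᵢ)_b` torsion-free
over `B_b`, then some nonzero `a ∈ A` makes every `(Mᵢ)_a` torsion-free over `A_a`. -/
theorem stmt_8 (A B : Type*) [CommRing A] [IsDomain A] [CommRing B] [IsDomain B]
    [Algebra A B] (hinj : Function.Injective (algebraMap A B)) [Module.Finite A B]
    (M : ℕ → Type*) [∀ i, AddCommGroup (M i)] [∀ i, Module B (M i)]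
    [∀ i, Module A (M i)] [∀ i, IsScalarTower A B (M i)]
    (hB : ∃ b : B, b ≠ 0 ∧ ∀ i,
      NoZeroSMulDivisors (Localization (Submonoid.powers b))
        (LocalizedModule (Submonoid.powers b) (M i))) :
    ∃ a : A, a ≠ 0 ∧ ∀ i,
      NoZeroSMulDivisors (Localization (Submonoid.powers a))
        (LocalizedModule (Submonoid.powers a) (M i)) := by
  obtain ⟨b, hb, htf⟩ := hB
  obtain ⟨a, ha, c, hac⟩ := (IsIntegral.of_finite A b).isAlgebraic.exists_nonzero_dvd
    (mem_nonZeroDivisors_of_ne_zero hb)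
  refine ⟨a, ha, fun i => (noZeroSMulDivisors_localizedModule_powers_iff a).mpr
    fun r hr x hrx => ?_⟩
  obtain ⟨k, hk⟩ := (noZeroSMulDivisors_localizedModule_powers_iff b).mp (htf i)
    (algebraMap A B r) ((map_ne_zero_iff _ hinj).mpr hr) x (by rwa [algebraMap_smul])
  refine ⟨k, ?_⟩
  rw [← algebraMap_smul B, map_pow, hac, mul_pow, mul_comm, mul_smul, hk, smul_zero]
end

section
/- Let $R$ be a Noetherian ring of prime characteristic $p$, $N \subseteq M$ finitely generated $R$-modules, and $S \subseteq R$ a multiplicative system disjoint from $\bigcup_e \mathrm{Ass}\, F^e(M/N)$ (meaning $S$ meets no prime in this union). Then tight closure commutes with localization at $S$ for the pair $N \subseteq M$: $S^{-1}(N^*_M) = (S^{-1}N)^*_{S^{-1}M}$. -/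
open TensorProduct

/-- `R` viewed as an `R`-algebra via the `e`-th iterated Frobenius `r ↦ r^(p^e)`. -/
def FrobAlg (R : Type*) (p e : ℕ) : Type _ := R

instance {R : Type*} [CommRing R] {p e : ℕ} : CommRing (FrobAlg R p e) := ‹CommRing R›

noncomputable instance {R : Type*} [CommRing R] {p e : ℕ} [ExpChar R p] :
    Algebra R (FrobAlg R p e) :=
  (show R →+* FrobAlg R p e from iterateFrobenius R p e).toAlgebra

/-- The image `N^{[q]}_M` of `F^e(N)` in the Peskine–Szpiro base change
`F^e(M) = S ⊗_R M` (where `S` is `R` viewed via the `e`-th Frobenius):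
the `S`-submodule generated by the elements `1 ⊗ n`, `n ∈ N`. -/
noncomputable def FrobPow {R : Type*} [CommRing R] (p e : ℕ) [ExpChar R p]
    {M : Type*} [AddCommGroup M] [Module R M] (N : Submodule R M) :
    Submodule (FrobAlg R p e) (TensorProduct R (FrobAlg R p e) M) :=
  Submodule.span (FrobAlg R p e)
    ((fun n => (1 : FrobAlg R p e) ⊗ₜ[R] n) '' (N : Set M))

/-- `R⁰`: the elements of `R` lying in no minimal prime. -/
def RZero (R : Type*) [CommRing R] : Set R := { c | ∀ P ∈ minimalPrimes R, c ∉ P }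

/-- The tight closure `N^*_M`: all `m ∈ M` such that for some `c ∈ R⁰`,
`c·m^q ∈ N^{[q]}_M` for all `q = p^e ≫ 0`. -/
noncomputable def TightClosure (R : Type*) [CommRing R] (p : ℕ) [ExpChar R p]
    {M : Type*} [AddCommGroup M] [Module R M] (N : Submodule R M) : Set M :=
  { m | ∃ c ∈ RZero R, ∃ E : ℕ, ∀ e, E ≤ e →
      (show FrobAlg R p e from c) • ((1 : FrobAlg R p e) ⊗ₜ[R] m) ∈ FrobPow p e N }

/-!
Localization commutes with the Frobenius functor up to `S`-torsion: an element of `Fᵉ(M)` whose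
image in `Fᵉ(S⁻¹M)` lies in `(S⁻¹N)^[q]` lies in `N^[q]` after multiplication by some
`s ∈ S`. The hypothesis on associated primes says exactly that every `s ∈ S` is a nonzerodivisor
on `Fᵉ(M/N) = Fᵉ(M)/N^[q]`, so such `s` can be cancelled. Hence if `c/t` is a test element for
`m/s` over `S⁻¹R`, then `c` lies in the ideal `D` of all `d` with `d·m^q ∈ N^[q]` for `q ≫ 0`.
This `D` avoids every minimal prime: those disjoint from `S` because `c` is not in them, and a
minimal prime `P` meeting `S` in some `t` because `y·tⁿ = 0` for some `y ∉ P`, and cancelling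
`tⁿ` puts `y` in `D`. Prime avoidance over the finitely many minimal primes yields a test element
in `D ∩ R⁰`.
-/

namespace FrobAlg

variable (R : Type*) [CommRing R] (p e : ℕ)

def ofRing : R →+* FrobAlg R p e := RingHom.id R

instance [IsNoetherianRing R] : IsNoetherianRing (FrobAlg R p e) := ‹IsNoetherianRing R›

variable {R p e} [ExpChar R p]

theorem smul_eq_ofRing_mul (r : R) (a : FrobAlg R p e) : r • a = ofRing R p e (r ^ p ^ e) * a :=
  congrArg (· * a) (iterateFrobenius_def (R := R) p e r)

theorem one_tmul_smul {M : Type*} [AddCommGroup M] [Module R M] (r : R) (m : M) :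
    (1 : FrobAlg R p e) ⊗ₜ[R] (r • m) =
      ofRing R p e (r ^ p ^ e) • (1 : FrobAlg R p e) ⊗ₜ[R] m := by
  rw [← smul_tmul, smul_eq_ofRing_mul, smul_tmul', smul_eq_mul]

end FrobAlg

theorem isSMulRegular_of_forall_notMem_associatedPrimes {A X : Type*} [CommRing A]
    [IsNoetherianRing A] [AddCommGroup X] [Module A X] {a : A}
    (ha : ∀ P ∈ associatedPrimes A X, a ∉ P) : IsSMulRegular X a := by
  refine .of_right_eq_zero_of_smul fun x hx => by_contra fun hne => ?_
  have hzd : a ∈ ⋃ P ∈ associatedPrimes A X, (P : Set A) := by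
    rw [biUnion_associatedPrimes_eq_zero_divisors]
    exact ⟨x, hne, hx⟩
  obtain ⟨P, hP, haP⟩ := Set.mem_iUnion₂.mp hzd
  exact ha P hP haP

namespace FrobPow

variable {R : Type*} [CommRing R] {p e : ℕ} [ExpChar R p]
variable {M : Type*} [AddCommGroup M] [Module R M]

theorem eq_baseChange (N : Submodule R M) : FrobPow p e N = N.baseChange (FrobAlg R p e) := by
  rw [Submodule.baseChange_eq_span, Submodule.map_coe]; rfl

theorem eq_ker_baseChange_mkQ (N : Submodule R M) :
    FrobPow p e N = LinearMap.ker (N.mkQ.baseChange (FrobAlg R p e)) := by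
  ext x
  rw [eq_baseChange, Submodule.baseChange, LinearMap.mem_range, LinearMap.mem_ker,
    LinearMap.baseChange_eq_ltensor, LinearMap.baseChange_eq_ltensor]
  exact ((lTensor_exact _ (LinearMap.exact_subtype_mkQ N) N.mkQ_surjective) x).symm

theorem mem_of_smul_mem {N : Submodule R M} {a : FrobAlg R p e}
    (ha : IsSMulRegular (FrobAlg R p e ⊗[R] (M ⧸ N)) a) {x : FrobAlg R p e ⊗[R] M}
    (hx : a • x ∈ FrobPow p e N) : x ∈ FrobPow p e N := by
  rw [eq_ker_baseChange_mkQ, LinearMap.mem_ker, map_smul] at *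
  exact ha.right_eq_zero_of_smul hx

end FrobPow

section MinimalPrimes

variable {R : Type*} [CommRing R]

theorem exists_mul_pow_eq_zero_of_mem_minimalPrimes {P : Ideal R} (hP : P ∈ minimalPrimes R)
    {t : R} (ht : t ∈ P) : ∃ y ∉ P, ∃ n : ℕ, y * t ^ n = 0 := by
  have : P.IsPrime := hP.1.1
  have htrad : algebraMap R (Localization.AtPrime P) t ∈
      ((⊥ : Ideal R).map (algebraMap R (Localization.AtPrime P))).radical := by
    rw [IsLocalization.AtPrime.radical_map_of_mem_minimalPrimes _ P ⊥ hP]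
    exact Ideal.mem_map_of_mem _ ht
  obtain ⟨n, hn⟩ := htrad
  rw [Ideal.map_bot, Ideal.mem_bot, ← map_pow,
    IsLocalization.map_eq_zero_iff P.primeCompl] at hn
  obtain ⟨⟨y, hy⟩, hyt⟩ := hn
  exact ⟨y, hy, n, hyt⟩

theorem exists_mem_rZero_of_forall_not_le [IsNoetherianRing R] {I : Ideal R}
    (hI : ∀ P ∈ minimalPrimes R, ¬ I ≤ P) : ∃ c ∈ I, c ∈ RZero R := by
  by_contra! h
  have hsub : (I : Set R) ⊆ ⋃ P ∈ minimalPrimes R, (P : Set R) := fun c hc => by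
    simpa [RZero] using h c hc
  obtain ⟨P, hP, hIP⟩ := (Ideal.subset_union_prime_finite (f := id)
    (minimalPrimes.finite_of_isNoetherianRing R) ⊥ ⊥ (fun _ hP _ _ => hP.1.1)).mp hsub
  exact hI P hP hIP

variable (S : Submonoid R)

theorem mem_minimalPrimes_localization_iff {P : Ideal (Localization S)} :
    P ∈ minimalPrimes (Localization S) ↔ P.under R ∈ minimalPrimes R := by
  have := IsLocalization.minimalPrimes_map S (Localization S) (⊥ : Ideal R)
  rw [Ideal.map_bot] at this
  exact Set.ext_iff.mp this P

theorem algebraMap_mem_rZero_localization {c : R} (hc : c ∈ RZero R) :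
    algebraMap R (Localization S) c ∈ RZero (Localization S) := fun _ hP hcP =>
  hc _ ((mem_minimalPrimes_localization_iff S).mp hP) hcP

theorem notMem_of_mk'_mem_rZero_localization {c : R} {t : S}
    (hc : IsLocalization.mk' (Localization S) c t ∈ RZero (Localization S)) {P : Ideal R}
    (hP : P ∈ minimalPrimes R) (hPS : Disjoint (S : Set R) P) : c ∉ P := by
  intro hcP
  refine hc (P.map (algebraMap R (Localization S))) ?_ ?_
  · rw [mem_minimalPrimes_localization_iff,
      IsLocalization.under_map_of_isPrime_disjoint S _ hP.1.1 hPS]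
    exact hP
  · rw [IsLocalization.mk'_eq_mul_mk'_one]
    exact Ideal.mul_mem_right _ _ (Ideal.mem_map_of_mem _ hcP)

end MinimalPrimes

namespace FrobAlg

variable {R : Type*} [CommRing R] {p : ℕ} (e : ℕ) (S : Submonoid R)
variable {M : Type*} [AddCommGroup M] [Module R M]

-- Instance search misses `TensorProduct.addCommGroup` here, through the twisted algebra structure.
noncomputable instance [ExpChar (Localization S) p] :
    AddCommGroup (FrobAlg (Localization S) p e ⊗[Localization S] LocalizedModule S M) :=
  Module.addCommMonoidToAddCommGroup (FrobAlg (Localization S) p e)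

def toLocalization : FrobAlg R p e →+* FrobAlg (Localization S) p e :=
  algebraMap R (Localization S)

theorem toLocalization_ofRing (r : R) :
    toLocalization e S (ofRing R p e r) = ofRing (Localization S) p e (algebraMap R _ r) := rfl

theorem exists_toLocalization_mul_eq (a : FrobAlg (Localization S) p e) :
    ∃ t ∈ S, ∃ b : R,
      toLocalization e S (ofRing R p e t) * a = toLocalization e S (ofRing R p e b) := by
  obtain ⟨⟨b, t⟩, h⟩ := IsLocalization.surj S (show Localization S from a)
  exact ⟨t, t.2, b, (mul_comm _ _).trans h⟩

variable [ExpChar R p] [ExpChar (Localization S) p]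

noncomputable def localizeTensor :
    FrobAlg R p e ⊗[R] M →+
      FrobAlg (Localization S) p e ⊗[Localization S] LocalizedModule S M :=
  liftAddHom
    (AddMonoidHom.mk' (fun a : FrobAlg R p e =>
        (TensorProduct.mk (Localization S) (FrobAlg (Localization S) p e) (LocalizedModule S M)
          (toLocalization e S a)).toAddMonoidHom.comp
            (LocalizedModule.mkLinearMap S M).toAddMonoidHom)
      (fun a b => by ext m; simp))
    (fun r a m => by
      simp only [AddMonoidHom.mk'_apply, AddMonoidHom.coe_comp, LinearMap.toAddMonoidHom_coe,
        Function.comp_apply, mk_apply, map_smul, ← algebraMap_smul (Localization S) r, smul_tmul',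
        smul_eq_ofRing_mul, map_mul, map_pow, toLocalization_ofRing])

variable {e S}

theorem localizeTensor_tmul (a : FrobAlg R p e) (m : M) :
    localizeTensor e S (a ⊗ₜ[R] m) = toLocalization e S a ⊗ₜ LocalizedModule.mk m 1 := rfl

theorem localizeTensor_smul (a : FrobAlg R p e) (x : FrobAlg R p e ⊗[R] M) :
    localizeTensor e S (a • x) = toLocalization e S a • localizeTensor e S x := by
  induction x with
  | zero => simp only [smul_zero, map_zero]
  | tmul b m => simp only [smul_tmul', smul_eq_mul, localizeTensor_tmul, map_mul]
  | add x y hx hy => simp only [smul_add, map_add, hx, hy]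

theorem localizeTensor_mem_frobPow {N : Submodule R M} {x : FrobAlg R p e ⊗[R] M}
    (hx : x ∈ FrobPow p e N) : localizeTensor e S x ∈ FrobPow p e (N.localized S) := by
  induction hx using Submodule.span_induction with
  | mem y hy =>
    obtain ⟨n, hn, rfl⟩ := hy
    rw [localizeTensor_tmul, map_one]
    exact Submodule.subset_span ⟨_, Submodule.map_le_localized₀ _ _ _ ⟨n, hn, rfl⟩, rfl⟩
  | zero => rw [map_zero]; exact zero_mem _
  | add y z _ _ hy hz => rw [map_add]; exact add_mem hy hz
  | smul a y _ hy => rw [localizeTensor_smul]; exact Submodule.smul_mem _ _ hy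

theorem frobPow_localized_eq_span (N : Submodule R M) :
    FrobPow p e (N.localized S) = Submodule.span (FrobAlg (Localization S) p e)
      ((fun n => localizeTensor e S ((1 : FrobAlg R p e) ⊗ₜ[R] n)) '' N) := by
  rw [FrobPow.eq_baseChange, Submodule.localized, Submodule.localized'_eq_span,
    Submodule.baseChange_span, Set.image_image]
  simp only [localizeTensor_tmul, map_one, mk_apply, LocalizedModule.mkLinearMap_apply]

theorem exists_smul_eq_localizeTensor {N : Submodule R M}
    {y : FrobAlg (Localization S) p e ⊗[Localization S] LocalizedModule S M}
    (hy : y ∈ FrobPow p e (N.localized S)) :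
    ∃ s ∈ S, ∃ w ∈ FrobPow p e N,
      toLocalization e S (ofRing R p e s) • y = localizeTensor e S w := by
  rw [frobPow_localized_eq_span] at hy
  induction hy using Submodule.span_induction with
  | mem y hy =>
    obtain ⟨n, hn, rfl⟩ := hy
    exact ⟨1, one_mem S, _, Submodule.subset_span ⟨n, hn, rfl⟩,
      by rw [map_one, map_one, one_smul]⟩
  | zero => exact ⟨1, one_mem S, 0, zero_mem _, by rw [smul_zero, map_zero]⟩
  | add y z _ _ hy hz =>
    obtain ⟨s, hs, w, hw, hsw⟩ := hy
    obtain ⟨t, ht, v, hv, htv⟩ := hz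
    refine ⟨s * t, mul_mem hs ht, ofRing R p e t • w + ofRing R p e s • v,
      add_mem (Submodule.smul_mem _ _ hw) (Submodule.smul_mem _ _ hv), ?_⟩
    rw [map_add, localizeTensor_smul, localizeTensor_smul, ← hsw, ← htv, smul_smul, smul_smul,
      ← map_mul, ← map_mul, ← map_mul, ← map_mul, mul_comm t, smul_add]
  | smul a y _ hy =>
    obtain ⟨s, hs, w, hw, hsw⟩ := hy
    obtain ⟨t, ht, b, htb⟩ := exists_toLocalization_mul_eq e S a
    refine ⟨t * s, mul_mem ht hs, ofRing R p e b • w, Submodule.smul_mem _ _ hw, ?_⟩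
    rw [localizeTensor_smul, ← hsw, smul_smul, smul_smul, ← htb, map_mul, map_mul]
    congr 1
    ring

end FrobAlg

namespace FrobAlg

variable {R : Type*} [CommRing R] {p : ℕ} (e : ℕ) (S : Submonoid R)
variable {M : Type*} [AddCommGroup M] [Module R M]

variable (p) in
def submonoid : Submonoid (FrobAlg R p e) := S

/-- `Localization (submonoid p e S)` is `Localization S` by definition; this identity map lets
`FrobAlg (Localization S) p e` act on localizations of `Fᵉ(M)` at `S`. -/
def toLocalizationSubmonoid : FrobAlg (Localization S) p e →+* Localization (submonoid p e S) :=
  RingHom.id _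

variable (p) in
def submonoidPow : S →* submonoid p e S where
  toFun s := ⟨ofRing R p e ((s : R) ^ p ^ e), pow_mem s.2 _⟩
  map_one' := Subtype.ext (one_pow _)
  map_mul' _ _ := Subtype.ext (mul_pow _ _ _)

variable [ExpChar R p]

variable {e S}

theorem submonoidPow_smul_one_tmul (s : S) (m : M) :
    submonoidPow p e S s • (1 : FrobAlg R p e) ⊗ₜ[R] m =
      (1 : FrobAlg R p e) ⊗ₜ[R] ((s : R) • m) :=
  (one_tmul_smul _ _).symm

variable (p e S) in
noncomputable def localizedOneTmul :
    LocalizedModule S M →+ LocalizedModule (submonoid p e S) (FrobAlg R p e ⊗[R] M) where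
  toFun x := x.liftOn
    (fun ms => LocalizedModule.mk ((1 : FrobAlg R p e) ⊗ₜ[R] ms.1) (submonoidPow p e S ms.2))
    (by
      rintro ⟨m, s⟩ ⟨m', s'⟩ ⟨u, hu⟩
      refine LocalizedModule.mk_eq.mpr ⟨submonoidPow p e S u, ?_⟩
      simp only [submonoidPow_smul_one_tmul, ← Submonoid.smul_def] at hu ⊢
      rw [hu])
  map_zero' := by
    rw [← LocalizedModule.zero_mk 1, LocalizedModule.liftOn_mk, tmul_zero,
      LocalizedModule.zero_mk]
  map_add' x y := by
    induction x, y using LocalizedModule.induction_on₂ with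
    | _ m m' s s' =>
      simp only [LocalizedModule.mk_add_mk, LocalizedModule.liftOn_mk, map_mul,
        submonoidPow_smul_one_tmul, tmul_add, ← Submonoid.smul_def]

theorem localizedOneTmul_mk (m : M) (s : S) :
    localizedOneTmul p e S (LocalizedModule.mk m s) =
      LocalizedModule.mk ((1 : FrobAlg R p e) ⊗ₜ[R] m) (submonoidPow p e S s) :=
  rfl

theorem localizedOneTmul_smul (r : Localization S) (z : LocalizedModule S M) :
    localizedOneTmul p e S (r • z) =
      toLocalizationSubmonoid e S (ofRing (Localization S) p e (r ^ p ^ e)) •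
        localizedOneTmul p e S z := by
  induction r using Localization.induction_on with
  | H bt =>
    obtain ⟨b, t⟩ := bt
    induction z with
    | _ m s =>
      have hpow : toLocalizationSubmonoid e S
          (ofRing (Localization S) p e (Localization.mk b t ^ p ^ e)) =
            Localization.mk (ofRing R p e (b ^ p ^ e)) (submonoidPow p e S t) := by
        rw [Localization.mk_pow]; rfl
      rw [hpow, LocalizedModule.mk_smul_mk, localizedOneTmul_mk, localizedOneTmul_mk,
        LocalizedModule.mk_smul_mk, map_mul, one_tmul_smul]

variable [ExpChar (Localization S) p]

variable (e S) in
noncomputable def localizedTensorToLocalized :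
    FrobAlg (Localization S) p e ⊗[Localization S] LocalizedModule S M →+
      LocalizedModule (submonoid p e S) (FrobAlg R p e ⊗[R] M) :=
  liftAddHom
    { toFun a := (DistribSMul.toAddMonoidHom _ (toLocalizationSubmonoid e S a)).comp
          (localizedOneTmul (M := M) p e S)
      map_zero' := by ext z; simp
      map_add' a b := by ext z; simp [add_smul] }
    (fun r a z => by
      simp [localizedOneTmul_smul, smul_eq_ofRing_mul, smul_smul, mul_comm])

theorem localizedTensorToLocalized_localizeTensor (x : FrobAlg R p e ⊗[R] M) :
    localizedTensorToLocalized e S (localizeTensor e S x) = LocalizedModule.mk x 1 := by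
  induction x with
  | zero => rw [map_zero, map_zero, LocalizedModule.zero_mk]
  | tmul a m =>
    have ha : toLocalizationSubmonoid e S (toLocalization e S a) = Localization.mk a 1 :=
      (Localization.mk_one_eq_algebraMap a).symm
    show toLocalizationSubmonoid e S (toLocalization e S a) •
      localizedOneTmul p e S (LocalizedModule.mk m 1) = _
    rw [ha, localizedOneTmul_mk, map_one, LocalizedModule.mk_smul_mk, one_mul, smul_tmul',
      smul_eq_mul, mul_one]
  | add x y hx hy =>
    rw [map_add, map_add, hx, hy, LocalizedModule.mk_add_mk, one_smul, one_smul, one_mul]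

theorem exists_smul_mem_frobPow_of_localizeTensor_mem {N : Submodule R M}
    {x : FrobAlg R p e ⊗[R] M} (hx : localizeTensor e S x ∈ FrobPow p e (N.localized S)) :
    ∃ s ∈ S, ofRing R p e s • x ∈ FrobPow p e N := by
  obtain ⟨t, ht, w, hw, htw⟩ := exists_smul_eq_localizeTensor hx
  rw [← localizeTensor_smul] at htw
  obtain ⟨u, hu⟩ := LocalizedModule.mk_eq.mp <| by
    simpa only [localizedTensorToLocalized_localizeTensor] using
      congrArg (localizedTensorToLocalized e S) htw
  rw [one_smul, one_smul, Submonoid.smul_def, Submonoid.smul_def] at hu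
  refine ⟨(show R from u.1) * t, mul_mem u.2 ht, ?_⟩
  rw [map_mul, ← smul_smul]
  exact hu ▸ Submodule.smul_mem _ _ hw

end FrobAlg

namespace TightClosure

variable {R : Type*} [CommRing R] {p : ℕ} [ExpChar R p] {M : Type*} [AddCommGroup M] [Module R M]

variable (p) in
def multiplierIdeal (N : Submodule R M) (m : M) (E : ℕ) : Ideal R where
  carrier := {d | ∀ e, E ≤ e →
    FrobAlg.ofRing R p e d • (1 : FrobAlg R p e) ⊗ₜ[R] m ∈ FrobPow p e N}
  zero_mem' e _ := by rw [map_zero, zero_smul]; exact zero_mem _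
  add_mem' ha hb e he := by rw [map_add, add_smul]; exact add_mem (ha e he) (hb e he)
  smul_mem' r d hd e he := by
    rw [smul_eq_mul, map_mul, mul_smul]; exact Submodule.smul_mem _ _ (hd e he)

theorem mem_of_mem_multiplierIdeal {N : Submodule R M} {m : M} {E : ℕ} {c : R}
    (hcI : c ∈ multiplierIdeal p N m E) (hc : c ∈ RZero R) : m ∈ TightClosure R p N :=
  ⟨c, hc, E, hcI⟩

theorem mem_multiplierIdeal_of_mul_mem {N : Submodule R M} {m : M} {E : ℕ} {s d : R}
    (hs : ∀ e, IsSMulRegular (FrobAlg R p e ⊗[R] (M ⧸ N)) (FrobAlg.ofRing R p e s))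
    (h : s * d ∈ multiplierIdeal p N m E) : d ∈ multiplierIdeal p N m E := fun e he =>
  FrobPow.mem_of_smul_mem (hs e) (by rw [smul_smul, ← map_mul]; exact h e he)

theorem smul_mem {N : Submodule R M} {m : M} (hm : m ∈ TightClosure R p N) (r : R) :
    r • m ∈ TightClosure R p N := by
  obtain ⟨c, hc, E, hE⟩ := hm
  refine ⟨c, hc, E, fun e he => ?_⟩
  rw [FrobAlg.one_tmul_smul, smul_comm]
  exact Submodule.smul_mem _ _ (hE e he)

variable (S : Submonoid R)

theorem multiplierIdeal_not_le_of_not_disjoint {N : Submodule R M}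
    (hS : ∀ s ∈ S, ∀ e,
      IsSMulRegular (FrobAlg R p e ⊗[R] (M ⧸ N)) (FrobAlg.ofRing R p e s))
    {m : M} {E : ℕ} {P : Ideal R} (hP : P ∈ minimalPrimes R)
    (hPS : ¬ Disjoint (S : Set R) (P : Set R)) : ¬ multiplierIdeal p N m E ≤ P := by
  obtain ⟨t, htS, htP⟩ := Set.not_disjoint_iff.mp hPS
  obtain ⟨y, hyP, n, hy⟩ := exists_mul_pow_eq_zero_of_mem_minimalPrimes hP htP
  have hyI : y ∈ multiplierIdeal p N m E :=
    mem_multiplierIdeal_of_mul_mem (hS _ (pow_mem htS n)) (by rw [mul_comm, hy]; exact zero_mem _)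
  exact fun hle => hyP (hle hyI)

variable [ExpChar (Localization S) p]

theorem multiplierIdeal_le_comap_localized (N : Submodule R M) (m : M) (E : ℕ) :
    multiplierIdeal p N m E ≤ (multiplierIdeal p (N.localized S) (LocalizedModule.mk m 1) E).comap
      (algebraMap R (Localization S)) := fun c hc e he => by
  have := FrobAlg.localizeTensor_mem_frobPow (S := S) (hc e he)
  rwa [FrobAlg.localizeTensor_smul, FrobAlg.localizeTensor_tmul, map_one] at this

theorem comap_localized_multiplierIdeal_le {N : Submodule R M}
    (hS : ∀ s ∈ S, ∀ e,
      IsSMulRegular (FrobAlg R p e ⊗[R] (M ⧸ N)) (FrobAlg.ofRing R p e s))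
    (m : M) (E : ℕ) :
    (multiplierIdeal p (N.localized S) (LocalizedModule.mk m 1) E).comap
      (algebraMap R (Localization S)) ≤ multiplierIdeal p N m E := fun c hc e he => by
  obtain ⟨s, hs, hx⟩ := FrobAlg.exists_smul_mem_frobPow_of_localizeTensor_mem (S := S)
    (x := FrobAlg.ofRing R p e c • (1 : FrobAlg R p e) ⊗ₜ[R] m)
    (by rw [FrobAlg.localizeTensor_smul, FrobAlg.localizeTensor_tmul, map_one]; exact hc e he)
  exact FrobPow.mem_of_smul_mem (hS s hs e) hx

theorem mk_mem_localized {N : Submodule R M} {m : M} (hm : m ∈ TightClosure R p N) (s : S) :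
    LocalizedModule.mk m s ∈ TightClosure (Localization S) p (N.localized S) := by
  obtain ⟨c, hc, E, hE⟩ := hm
  have h1 : LocalizedModule.mk m 1 ∈ TightClosure (Localization S) p (N.localized S) :=
    mem_of_mem_multiplierIdeal (multiplierIdeal_le_comap_localized S N m E hE)
      (algebraMap_mem_rZero_localization S hc)
  have := smul_mem h1 (Localization.mk 1 s)
  rwa [LocalizedModule.mk_smul_mk, one_smul, mul_one] at this

theorem mem_of_mk_one_mem_localized [IsNoetherianRing R] {N : Submodule R M}
    (hS : ∀ s ∈ S, ∀ e,
      IsSMulRegular (FrobAlg R p e ⊗[R] (M ⧸ N)) (FrobAlg.ofRing R p e s))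
    {m : M} (h : LocalizedModule.mk m 1 ∈ TightClosure (Localization S) p (N.localized S)) :
    m ∈ TightClosure R p N := by
  obtain ⟨c', hc', E, hE⟩ := h
  obtain ⟨⟨c, t⟩, hct⟩ := IsLocalization.mk'_surjective S c'
  dsimp only at hct
  subst hct
  have hcI : c ∈ multiplierIdeal p N m E := by
    refine comap_localized_multiplierIdeal_le S hS m E ?_
    rw [Ideal.mem_comap, ← IsLocalization.mk'_spec' (Localization S) c t]
    exact Ideal.mul_mem_left _ _ hE
  obtain ⟨d, hdI, hd⟩ := exists_mem_rZero_of_forall_not_le (I := multiplierIdeal p N m E)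
    fun P hP hle => by
      by_cases hPS : Disjoint (S : Set R) (P : Set R)
      · exact notMem_of_mk'_mem_rZero_localization S hc' hP hPS (hle hcI)
      · exact multiplierIdeal_not_le_of_not_disjoint S hS hP hPS hle
  exact mem_of_mem_multiplierIdeal hdI hd

theorem mem_of_mk_mem_localized [IsNoetherianRing R] {N : Submodule R M}
    (hS : ∀ s ∈ S, ∀ e,
      IsSMulRegular (FrobAlg R p e ⊗[R] (M ⧸ N)) (FrobAlg.ofRing R p e s))
    {m : M} {s : S}
    (h : LocalizedModule.mk m s ∈ TightClosure (Localization S) p (N.localized S)) :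
    m ∈ TightClosure R p N := by
  have := smul_mem h (algebraMap R (Localization S) s)
  rw [← Localization.mk_one_eq_algebraMap, LocalizedModule.mk_smul_mk, one_mul,
    ← Submonoid.smul_def, LocalizedModule.mk_cancel] at this
  exact mem_of_mk_one_mem_localized S hS this

end TightClosure

theorem stmt_15_general (R : Type*) [CommRing R] [IsNoetherianRing R] (p : ℕ) [Fact p.Prime]
    [CharP R p]
    (M : Type*) [AddCommGroup M] [Module R M]
    (N : Submodule R M) (S : Submonoid R) [CharP (Localization S) p]
    (hdisj : ∀ e : ℕ, ∀ P ∈ associatedPrimes (FrobAlg R p e)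
        (TensorProduct R (FrobAlg R p e) (M ⧸ N)),
      Disjoint (S : Set R) (show Set R from (P : Set (FrobAlg R p e)))) :
    { x : LocalizedModule S M |
        ∃ m ∈ TightClosure R p N, ∃ s : S, x = LocalizedModule.mk m s } =
      TightClosure (Localization S) p (N.localized S) := by
  have hreg : ∀ s ∈ S, ∀ e,
      IsSMulRegular (FrobAlg R p e ⊗[R] (M ⧸ N)) (FrobAlg.ofRing R p e s) :=
    fun s hs e => isSMulRegular_of_forall_notMem_associatedPrimes fun P hP =>
      Set.disjoint_left.mp (hdisj e P hP) hs
  ext x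
  constructor
  · rintro ⟨m, hm, s, rfl⟩
    exact TightClosure.mk_mem_localized S hm s
  · induction x with
    | _ m s => exact fun hx => ⟨m, TightClosure.mem_of_mk_mem_localized S hreg hx, s, rfl⟩

/-- If the multiplicative system `S` is disjoint from `⋃ₑ Ass Fᵉ(M/N)`, then tight closure
commutes with localization at `S` for the pair `N ⊆ M`:
`S⁻¹(N^*_M) = (S⁻¹N)^*_{S⁻¹M}`. -/
theorem stmt_15 (R : Type*) [CommRing R] [IsNoetherianRing R] (p : ℕ) [Fact p.Prime]
    [CharP R p]
    (M : Type*) [AddCommGroup M] [Module R M] [Module.Finite R M]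
    (N : Submodule R M) (S : Submonoid R) [CharP (Localization S) p]
    (hdisj : ∀ e : ℕ, ∀ P ∈ associatedPrimes (FrobAlg R p e)
        (TensorProduct R (FrobAlg R p e) (M ⧸ N)),
      Disjoint (S : Set R) (show Set R from (P : Set (FrobAlg R p e)))) :
    { x : LocalizedModule S M |
        ∃ m ∈ TightClosure R p N, ∃ s : S, x = LocalizedModule.mk m s } =
      TightClosure (Localization S) p (N.localized S) :=
  stmt_15_general R p M N S hdisj
end

section
/- Let $k$ be a field of characteristic $p > 0$, $q = p^e > 2$, and $R = k[t][x,y]$. Suppose $d \in k[t]$ and $a', c \in R$ satisfy $d(x-y)y^{q-2} - a'x^{q-1} - c(x-y)(x-ty) \in (y^{q-1})$. Then $d \cdot y^{q-2} \in (x - ty, y^{q-1}, \gamma)$ where $\gamma = \sum_{i=0}^{q-2} x^i y^{q-2-i}$, and consequently $\tau = \sum_{i=0}^{q-2} t^i$ divides $d$ in $k[t]$. -/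
open MvPolynomial

/-! Grouping the terms divisible by `x - y`, the hypothesis says `(x - y)(d y^(q-2) - c(x - t y))`
lies in `(x^(q-1), y^(q-1))`. Since `x - y` is prime and `x^(q-1) ≡ y^(q-1)` modulo it, the colon
ideal `(x^(q-1), y^(q-1)) : (x - y)` is contained in `(y^(q-1), γ)`, where `γ (x - y) = x^(q-1) - y^(q-1)`.
Substituting `x ↦ t y` then gives `d y^(q-2) ∈ (y^(q-1), τ y^(q-2))` in `k[t][y]`, and comparing
coefficients of `y^(q-2)` shows `τ ∣ d`. -/

theorem mem_span_pow_geom_sum₂_of_sub_mul_mem {A : Type*} [CommRing A] [IsDomain A]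
    {x y f : A} {n : ℕ} (hprime : Prime (x - y)) (hy : ¬ x - y ∣ y)
    (h : (x - y) * f ∈ Ideal.span {x ^ (n + 1), y ^ (n + 1)}) :
    f ∈ Ideal.span {y ^ (n + 1), ∑ i ∈ Finset.range (n + 1), x ^ i * y ^ (n - i)} := by
  set γ := ∑ i ∈ Finset.range (n + 1), x ^ i * y ^ (n - i)
  have hγ : γ * (x - y) = x ^ (n + 1) - y ^ (n + 1) := by
    simpa using geom_sum₂_mul x y (n + 1)
  obtain ⟨a, b, hab⟩ := Ideal.mem_span_pair.mp h
  have hkey : (x - y) * (f - a * γ) = y ^ (n + 1) * (a + b) := by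
    linear_combination -hab - a * hγ
  obtain ⟨w, hw⟩ : x - y ∣ a + b :=
    (hprime.dvd_or_dvd ⟨_, hkey.symm⟩).resolve_left fun hpow => hy (hprime.dvd_of_dvd_pow hpow)
  have hf : f = w * y ^ (n + 1) + a * γ := by
    apply mul_left_cancel₀ hprime.ne_zero
    linear_combination hkey + y ^ (n + 1) * hw
  rw [hf]
  exact Ideal.add_mem _ (Ideal.mul_mem_left _ _ (Ideal.subset_span (by simp)))
    (Ideal.mul_mem_left _ _ (Ideal.subset_span (by simp)))

theorem Polynomial.dvd_of_C_mul_X_pow_mem_span {R : Type*} [CommRing R] {d τ : R} {n : ℕ}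
    (h : C d * X ^ n ∈ Ideal.span {X ^ (n + 1), C τ * X ^ n}) : τ ∣ d := by
  obtain ⟨a, b, hab⟩ := Ideal.mem_span_pair.mp h
  have hfactor : (a * X + C τ * b) * X ^ n = C d * X ^ n := by
    rw [← hab]; ring
  have hcoeff := congrArg (coeff · 0) ((isRegular_X_pow n).right hfactor)
  simp only [coeff_add, coeff_mul_X_zero, coeff_C_mul, coeff_C_zero, zero_add] at hcoeff
  exact ⟨_, hcoeff.symm⟩

namespace MvPolynomial

theorem prime_X_zero_sub_X_one {R : Type*} [CommRing R] [IsDomain R] :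
    Prime (X 0 - X 1 : MvPolynomial (Fin 2) R) := by
  rw [← MulEquiv.prime_iff (finSuccEquiv R 1).toMulEquiv]
  have : finSuccEquiv R 1 (X 0 - X 1) = Polynomial.X - Polynomial.C (X 0) := by
    rw [map_sub, finSuccEquiv_X_zero, show (1 : Fin 2) = (0 : Fin 1).succ from rfl,
      finSuccEquiv_X_succ]
  simpa [this] using Polynomial.prime_X_sub_C (X 0 : MvPolynomial (Fin 1) R)

theorem not_X_sub_X_dvd_X {R σ : Type*} [CommRing R] [Nontrivial R] (i j : σ) :
    ¬ (X i - X j : MvPolynomial σ R) ∣ X j := by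
  intro hdvd
  simpa using map_dvd (eval fun _ => (1 : R)) hdvd

theorem aeval_geom_sum₂_X_mul {R : Type*} [CommRing R] (a : R) (n : ℕ) :
    aeval ![Polynomial.C a * Polynomial.X, Polynomial.X]
        (∑ i ∈ Finset.range (n + 1), X 0 ^ i * X 1 ^ (n - i) : MvPolynomial (Fin 2) R) =
      Polynomial.C (∑ i ∈ Finset.range (n + 1), a ^ i) * Polynomial.X ^ n := by
  simp only [map_sum, map_mul, map_pow, aeval_X, Matrix.cons_val_zero, Matrix.cons_val_one,
    Finset.sum_mul]
  refine Finset.sum_congr rfl fun i hi => ?_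
  rw [mul_pow, mul_assoc, ← pow_add, Nat.add_sub_cancel' (Finset.mem_range_succ_iff.mp hi)]

theorem geom_sum_dvd_of_C_mul_X_pow_mem_span {R : Type*} [CommRing R] {a d : R} {n : ℕ}
    (h : (C d * X 1 ^ n : MvPolynomial (Fin 2) R) ∈
      Ideal.span {X 0 - C a * X 1, X 1 ^ (n + 1),
        ∑ i ∈ Finset.range (n + 1), X 0 ^ i * X 1 ^ (n - i)}) :
    (∑ i ∈ Finset.range (n + 1), a ^ i) ∣ d := by
  have hmap := Ideal.mem_map_of_mem
    (aeval ![Polynomial.C a * Polynomial.X, Polynomial.X] :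
      MvPolynomial (Fin 2) R →ₐ[R] Polynomial R) h
  simp only [Ideal.map_span, Set.image_insert_eq, Set.image_singleton, aeval_geom_sum₂_X_mul,
    map_sub, map_mul, map_pow, aeval_C, aeval_X, Matrix.cons_val_zero, Matrix.cons_val_one,
    Polynomial.algebraMap_eq, sub_self, Ideal.span_insert_zero] at hmap
  exact Polynomial.dvd_of_C_mul_X_pow_mem_span hmap

end MvPolynomial

theorem stmt_16_general (k : Type*) [Field k] (q : ℕ) (hq2 : 2 < q)
    (d : Polynomial k) (a' c : MvPolynomial (Fin 2) (Polynomial k))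
    (h : (C d * (X 0 - X 1) * X 1 ^ (q - 2) - a' * X 0 ^ (q - 1) -
        c * (X 0 - X 1) * (X 0 - C Polynomial.X * X 1) :
          MvPolynomial (Fin 2) (Polynomial k)) ∈
      Ideal.span {(X 1 : MvPolynomial (Fin 2) (Polynomial k)) ^ (q - 1)}) :
    (C d * X 1 ^ (q - 2) : MvPolynomial (Fin 2) (Polynomial k)) ∈
        Ideal.span {X 0 - C Polynomial.X * X 1,
          (X 1 : MvPolynomial (Fin 2) (Polynomial k)) ^ (q - 1),
          ∑ i ∈ Finset.range (q - 1), X 0 ^ i * X 1 ^ (q - 2 - i)} ∧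
      (∑ i ∈ Finset.range (q - 1), (Polynomial.X : Polynomial k) ^ i) ∣ d := by
  obtain ⟨n, rfl⟩ : ∃ n, q = n + 2 := ⟨q - 2, by omega⟩
  simp only [Nat.add_sub_cancel, show n + 2 - 1 = n + 1 by omega] at h ⊢
  set x : MvPolynomial (Fin 2) (Polynomial k) := X 0
  set y : MvPolynomial (Fin 2) (Polynomial k) := X 1
  have hcolon : C d * y ^ n - c * (x - C Polynomial.X * y) ∈
      Ideal.span {y ^ (n + 1), ∑ i ∈ Finset.range (n + 1), x ^ i * y ^ (n - i)} := by
    refine mem_span_pow_geom_sum₂_of_sub_mul_mem prime_X_zero_sub_X_one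
      (not_X_sub_X_dvd_X 0 1) ?_
    have hsum := Ideal.add_mem _ (Ideal.span_mono (Set.subset_insert _ _) h)
      (Ideal.mul_mem_left _ a' (Ideal.subset_span (Set.mem_insert (x ^ (n + 1)) _)))
    convert hsum using 1
    ring
  have hmem : C d * y ^ n ∈ Ideal.span {x - C Polynomial.X * y, y ^ (n + 1),
      ∑ i ∈ Finset.range (n + 1), x ^ i * y ^ (n - i)} := by
    rw [← sub_add_cancel (C d * y ^ n) (c * (x - C Polynomial.X * y))]
    exact Ideal.add_mem _ (Ideal.span_mono (Set.subset_insert _ _) hcolon)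
      (Ideal.mul_mem_left _ c (Ideal.subset_span (Set.mem_insert _ _)))
  exact ⟨hmem, geom_sum_dvd_of_C_mul_X_pow_mem_span hmem⟩

/-- In `R = k[t][x,y]`, `q = p^e > 2`: if `d ∈ k[t]` and `a', c ∈ R` satisfy
`d(x-y)y^(q-2) - a'x^(q-1) - c(x-y)(x-ty) ∈ (y^(q-1))`, then
`d·y^(q-2) ∈ (x - ty, y^(q-1), γ)` with `γ = ∑_{i=0}^{q-2} x^i y^(q-2-i)`, and
consequently `τ = ∑_{i=0}^{q-2} t^i` divides `d` in `k[t]`. -/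
theorem stmt_16 (k : Type*) [Field k] (p : ℕ) [Fact p.Prime] [CharP k p]
    (e : ℕ) (he : 1 ≤ e) (q : ℕ) (hq : q = p ^ e) (hq2 : 2 < q)
    (d : Polynomial k) (a' c : MvPolynomial (Fin 2) (Polynomial k))
    (h : (C d * (X 0 - X 1) * X 1 ^ (q - 2) - a' * X 0 ^ (q - 1) -
        c * (X 0 - X 1) * (X 0 - C Polynomial.X * X 1) :
          MvPolynomial (Fin 2) (Polynomial k)) ∈
      Ideal.span {(X 1 : MvPolynomial (Fin 2) (Polynomial k)) ^ (q - 1)}) :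
    (C d * X 1 ^ (q - 2) : MvPolynomial (Fin 2) (Polynomial k)) ∈
        Ideal.span {X 0 - C Polynomial.X * X 1,
          (X 1 : MvPolynomial (Fin 2) (Polynomial k)) ^ (q - 1),
          ∑ i ∈ Finset.range (q - 1), X 0 ^ i * X 1 ^ (q - 2 - i)} ∧
      (∑ i ∈ Finset.range (q - 1), (Polynomial.X : Polynomial k) ^ i) ∣ d :=
  stmt_16_general k q hq2 d a' c h
end
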